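/- arXiv:2409.15965 — 2 statements merged into one kernel-verified Lean document; each statement's English description precedes it below -/
import Mathlib

section
/- If μ = μ₁ ⊗ μ₂ ⊗ ⋯ ⊗ μ_d is a product of univariate probability measures on ℝ^d, then the coordinate-wise Christoffel polynomial factorizes: Λ_n^μ(x) = ∏_{i=1}^d Λ_n^{μ_i}(x_i) for all x ∈ ℝ^d and all n ∈ ℕ. -/
/-!
For each coordinate, `(p, q) ↦ ∫ p q dμᵢ` is positive definite on polynomials of degree `≤ n`
(a nonzero `p` with `∫ p² dμᵢ = 0`, normalised at a point where it does not vanish, would make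
`λᵢ⁻¹` vanish there), so evaluation at `xᵢ` is represented by a kernel `kᵢ`, and expanding
`0 ≤ ∫ (p - kᵢ / kᵢ(xᵢ))²` shows `λᵢ(xᵢ)⁻¹ = min {∫ p² : p(xᵢ) = 1} = kᵢ(xᵢ)⁻¹`. By Fubini the
product `∏ kᵢ(yᵢ)` reproduces every monomial `y^α` with all `αᵢ ≤ n` for the product measure, so
it is the reproducing kernel of the coordinate-wise degree `≤ n` polynomials, and the same
extremal identity gives `Λ(x) = ∏ kᵢ(xᵢ)`.
-/

open MeasureTheory MvPolynomial

namespace MeasureTheory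

section ReproducingKernel

variable {α E : Type*} [MeasurableSpace α] [AddCommGroup E] [Module ℝ E]

noncomputable def sqIntegralForm (ν : Measure α) (f : E →ₗ[ℝ] α → ℝ)
    (hint : ∀ p q, Integrable (fun x => f p x * f q x) ν) : LinearMap.BilinForm ℝ E :=
  LinearMap.mk₂ ℝ (fun p q => ∫ x, f p x * f q x ∂ν)
    (fun p p' q => by
      simp only [map_add, Pi.add_apply, add_mul]
      exact integral_add (hint _ _) (hint _ _))
    (fun c p q => by
      simp only [map_smul, Pi.smul_apply, smul_eq_mul, mul_assoc]
      exact integral_const_mul _ _)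
    (fun p q q' => by
      simp only [map_add, Pi.add_apply, mul_add]
      exact integral_add (hint _ _) (hint _ _))
    (fun c p q => by
      simp only [map_smul, Pi.smul_apply, smul_eq_mul, mul_left_comm]
      exact integral_const_mul _ _)

variable {ν : Measure α} {f : E →ₗ[ℝ] α → ℝ}

theorem sqIntegralForm_apply (hint : ∀ p q, Integrable (fun x => f p x * f q x) ν) (p q : E) :
    sqIntegralForm ν f hint p q = ∫ x, f p x * f q x ∂ν := rfl

theorem sqIntegralForm_comm (hint : ∀ p q, Integrable (fun x => f p x * f q x) ν) (p q : E) :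
    sqIntegralForm ν f hint p q = sqIntegralForm ν f hint q p := by
  simp only [sqIntegralForm_apply, mul_comm]

theorem sqIntegralForm_self_nonneg (hint : ∀ p q, Integrable (fun x => f p x * f q x) ν) (p : E) :
    0 ≤ sqIntegralForm ν f hint p p :=
  integral_nonneg fun _ => mul_self_nonneg _

variable (ν f) in
def IsReproducingKernel (V : Submodule ℝ E) (L : E →ₗ[ℝ] ℝ) (k : E) : Prop :=
  k ∈ V ∧ ∀ p ∈ V, ∫ x, f k x * f p x ∂ν = L p

variable (ν f) in
/-- The infimum of this set is the reciprocal of the Christoffel function at the point where `L`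
evaluates. -/
def constrainedSqIntegrals (V : Submodule ℝ E) (L : E →ₗ[ℝ] ℝ) : Set ℝ :=
  {v | ∃ p ∈ V, L p = 1 ∧ v = ∫ x, f p x ^ 2 ∂ν}

theorem integral_sq_eq_sqIntegralForm (hint : ∀ p q, Integrable (fun x => f p x * f q x) ν)
    (p : E) : ∫ x, f p x ^ 2 ∂ν = sqIntegralForm ν f hint p p := by
  simp only [sqIntegralForm_apply, sq]

theorem bddBelow_constrainedSqIntegrals (V : Submodule ℝ E) (L : E →ₗ[ℝ] ℝ) :
    BddBelow (constrainedSqIntegrals ν f V L) :=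
  ⟨0, by rintro v ⟨p, -, -, rfl⟩; exact integral_nonneg fun _ => sq_nonneg _⟩

theorem IsReproducingKernel.sInf_constrainedSqIntegrals
    (hint : ∀ p q, Integrable (fun x => f p x * f q x) ν) {V : Submodule ℝ E} {L : E →ₗ[ℝ] ℝ}
    {k : E} (hk : IsReproducingKernel ν f V L k) (hLk : 0 < L k) :
    sInf (constrainedSqIntegrals ν f V L) = (L k)⁻¹ := by
  set B := sqIntegralForm ν f hint
  have hrep : ∀ p ∈ V, B k p = L p := hk.2
  refine IsLeast.csInf_eq ⟨⟨(L k)⁻¹ • k, V.smul_mem _ hk.1, ?_, ?_⟩, ?_⟩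
  · rw [map_smul, smul_eq_mul, inv_mul_cancel₀ hLk.ne']
  · rw [integral_sq_eq_sqIntegralForm hint]
    simp only [map_smul, LinearMap.smul_apply, smul_eq_mul]
    rw [hrep k hk.1]
    field_simp
  · rintro v ⟨p, hpV, hLp, rfl⟩
    -- Cauchy–Schwarz against `k`, in the form `0 ≤ B (p - c • k) (p - c • k)`.
    have h := sqIntegralForm_self_nonneg hint (p - (L k)⁻¹ • k)
    simp only [map_sub, map_smul, LinearMap.sub_apply, LinearMap.smul_apply, smul_eq_mul,
      sqIntegralForm_comm hint p k] at h
    rw [integral_sq_eq_sqIntegralForm hint]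
    rw [hrep p hpV, hrep k hk.1, hLp] at h
    field_simp at h
    rw [inv_le_iff_one_le_mul₀ hLk]
    linarith

theorem integral_sq_pos_of_sInf_pos {V : Submodule ℝ E} {L : E →ₗ[ℝ] ℝ}
    (h : 0 < sInf (constrainedSqIntegrals ν f V L)) {p : E} (hp : p ∈ V) (hLp : L p ≠ 0) :
    0 < ∫ x, f p x ^ 2 ∂ν := by
  have hmem : ∫ x, f ((L p)⁻¹ • p) x ^ 2 ∂ν ∈ constrainedSqIntegrals ν f V L :=
    ⟨_, V.smul_mem _ hp, by rw [map_smul, smul_eq_mul, inv_mul_cancel₀ hLp], rfl⟩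
  have hscaled := h.trans_le (csInf_le (bddBelow_constrainedSqIntegrals V L) hmem)
  simp only [map_smul, Pi.smul_apply, smul_eq_mul, mul_pow, integral_const_mul] at hscaled
  exact pos_of_mul_pos_right hscaled (sq_nonneg _)

theorem exists_isReproducingKernel (hint : ∀ p q, Integrable (fun x => f p x * f q x) ν)
    {V : Submodule ℝ E} [FiniteDimensional ℝ V]
    (hpos : ∀ p ∈ V, p ≠ 0 → 0 < ∫ x, f p x ^ 2 ∂ν) (L : E →ₗ[ℝ] ℝ) :
    ∃ k, IsReproducingKernel ν f V L k := by
  set B := (sqIntegralForm ν f hint).restrict V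
  have hsep : ∀ p : V, B p p = 0 → p = 0 := fun p hp => by
    by_contra hne
    refine (hpos p p.2 (by simpa using hne)).ne' ?_
    rwa [integral_sq_eq_sqIntegralForm hint]
  have hB : B.Nondegenerate := ⟨fun p hp => hsep p (hp p), fun p hp => hsep p (hp p)⟩
  exact ⟨(B.toDual hB).symm (L.domRestrict V), Submodule.coe_mem _, fun p hp =>
    LinearMap.BilinForm.apply_toDual_symm_apply (hB := hB) (L.domRestrict V) ⟨p, hp⟩⟩

theorem isReproducingKernel_of_le_span (hint : ∀ p q, Integrable (fun x => f p x * f q x) ν)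
    {V : Submodule ℝ E} {L : E →ₗ[ℝ] ℝ} {k : E} {S : Set E} (hk : k ∈ V)
    (hV : V ≤ Submodule.span ℝ S) (hS : ∀ p ∈ S, ∫ x, f k x * f p x ∂ν = L p) :
    IsReproducingKernel ν f V L k :=
  ⟨hk, fun _ hp => LinearMap.eqOn_span' (f := sqIntegralForm ν f hint k) hS (hV hp)⟩

theorem IsReproducingKernel.apply_pos {V : Submodule ℝ E} {L : E →ₗ[ℝ] ℝ} {k : E}
    (hk : IsReproducingKernel ν f V L k) (hpos : ∀ p ∈ V, p ≠ 0 → 0 < ∫ x, f p x ^ 2 ∂ν)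
    {p : E} (hp : p ∈ V) (hLp : L p ≠ 0) : 0 < L k := by
  have hk0 : k ≠ 0 := by
    rintro rfl
    exact hLp (by simpa using (hk.2 p hp).symm)
  simpa only [← hk.2 k hk.1, sq] using hpos k hk.1 hk0

end ReproducingKernel

end MeasureTheory

theorem Continuous.integrable_of_ae_mem_isCompact {X E : Type*} [TopologicalSpace X]
    [MeasurableSpace X] [OpensMeasurableSpace X] [T2Space X] [NormedAddCommGroup E]
    {ν : Measure X} [IsFiniteMeasure ν] {K : Set X} (hK : IsCompact K) (hνK : ∀ᵐ x ∂ν, x ∈ K)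
    {g : X → E} (hg : Continuous g) : Integrable g ν :=
  Measure.restrict_eq_self_of_ae_mem hνK ▸ hg.continuousOn.integrableOn_compact hK

theorem MeasureTheory.Measure.ae_mem_univ_pi {ι : Type*} [Fintype ι] {α : ι → Type*}
    [∀ i, MeasurableSpace (α i)] {μ : ∀ i, Measure (α i)} [∀ i, SigmaFinite (μ i)]
    {K : ∀ i, Set (α i)} (h : ∀ i, ∀ᵐ x ∂μ i, x ∈ K i) :
    ∀ᵐ y ∂Measure.pi μ, y ∈ Set.univ.pi K := by
  simp only [Set.mem_univ_pi]
  exact ae_all_iff.2 fun i => Measure.tendsto_eval_ae_ae (h i)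

namespace Polynomial

variable (R : Type*) [CommSemiring R]

noncomputable def evalFunₗ : R[X] →ₗ[R] R → R := LinearMap.pi leval

variable {R}

@[simp]
theorem evalFunₗ_apply (p : R[X]) (t : R) : evalFunₗ R p t = p.eval t := rfl

end Polynomial

namespace MvPolynomial

variable (σ R : Type*) [CommSemiring R]

noncomputable def evalFunₗ : MvPolynomial σ R →ₗ[R] (σ → R) → R :=
  LinearMap.pi fun x => (aeval x).toLinearMap

variable {σ R}

@[simp]
theorem evalFunₗ_apply (p : MvPolynomial σ R) (x : σ → R) : evalFunₗ σ R p x = eval x p := rfl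

theorem mem_restrictDegree_iff_degreeOf_le {p : MvPolynomial σ R} {n : ℕ} :
    p ∈ restrictDegree σ R n ↔ ∀ i, degreeOf i p ≤ n := by
  simp only [mem_restrictDegree, degreeOf_le_iff]
  exact ⟨fun h i s hs => h s hs i, fun h s hs i => h i s hs⟩

theorem eval_polynomial_aeval_X (x : σ → R) (i : σ) (q : Polynomial R) :
    eval x (Polynomial.aeval (X i) q) = q.eval (x i) := by
  change aeval x (Polynomial.aeval (X i) q) = _
  rw [← Polynomial.aeval_algHom_apply, aeval_X, Polynomial.coe_aeval_eq_eval]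

theorem degreeOf_polynomial_aeval_X_le [Nontrivial R] [DecidableEq σ] (i j : σ)
    (q : Polynomial R) :
    degreeOf j (Polynomial.aeval (X i : MvPolynomial σ R) q) ≤
      if j = i then q.natDegree else 0 := by
  rw [Polynomial.aeval_eq_sum_range]
  refine (degreeOf_sum_le _ _ _).trans (Finset.sup_le fun m hm => ?_)
  rw [smul_eq_C_mul]
  refine (degreeOf_C_mul_le _ _ _).trans ?_
  split_ifs with h
  · subst h
    calc degreeOf j (X j ^ m) ≤ m * degreeOf j (X j : MvPolynomial σ R) := degreeOf_pow_le _ _ _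
      _ ≤ q.natDegree := by simpa using Finset.mem_range_succ_iff.1 hm
  · rw [degreeOf_X_pow_of_ne _ h]

end MvPolynomial

theorem Polynomial.finiteDimensional_degreeLE (K : Type*) [Field K] (n : ℕ) :
    FiniteDimensional K (Polynomial.degreeLE K n) := by
  classical
  rw [Polynomial.degreeLE_eq_span_X_pow]
  infer_instance

theorem MvPolynomial.prod_polynomial_aeval_X_mem_restrictDegree {ι R : Type*} [Fintype ι]
    [CommSemiring R] [Nontrivial R] {n : ℕ} {k : ι → Polynomial R}
    (hk : ∀ i, (k i).natDegree ≤ n) :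
    ∏ i, Polynomial.aeval (X i : MvPolynomial ι R) (k i) ∈ restrictDegree ι R n := by
  classical
  refine mem_restrictDegree_iff_degreeOf_le.2 fun j => (degreeOf_prod_le _ _ _).trans ?_
  calc ∑ i, degreeOf j (Polynomial.aeval (X i : MvPolynomial ι R) (k i))
      ≤ ∑ i, if j = i then (k i).natDegree else 0 :=
        Finset.sum_le_sum fun i _ => degreeOf_polynomial_aeval_X_le i j (k i)
    _ ≤ n := by simpa using hk j

section Christoffel

open Polynomial (degreeLE leval)

theorem Polynomial.setOf_natDegree_le_eq_constrainedSqIntegrals (ν : Measure ℝ) (n : ℕ)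
    (t : ℝ) :
    {v : ℝ | ∃ p : Polynomial ℝ, p.natDegree ≤ n ∧ p.eval t = 1 ∧
      v = ∫ s, (p.eval s) ^ 2 ∂ν} =
      constrainedSqIntegrals ν (evalFunₗ ℝ) (degreeLE ℝ n) (leval t) := by
  ext v
  simp [constrainedSqIntegrals, mem_degreeLE, natDegree_le_iff_degree_le]

theorem MvPolynomial.setOf_degreeOf_le_eq_constrainedSqIntegrals {σ : Type*}
    [MeasurableSpace (σ → ℝ)] (ν : Measure (σ → ℝ)) (n : ℕ) (x : σ → ℝ) :
    {v : ℝ | ∃ p : MvPolynomial σ ℝ, (∀ i, p.degreeOf i ≤ n) ∧ eval x p = 1 ∧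
      v = ∫ y, (eval y p) ^ 2 ∂ν} =
      constrainedSqIntegrals ν (evalFunₗ σ ℝ) (restrictDegree σ ℝ n) (aeval x).toLinearMap := by
  ext v
  simp [constrainedSqIntegrals, mem_restrictDegree_iff_degreeOf_le]

theorem Polynomial.integral_eval_sq_pos {ν : Measure ℝ} {n : ℕ}
    (h : ∀ t, 0 < sInf (constrainedSqIntegrals ν (evalFunₗ ℝ) (degreeLE ℝ n) (leval t)))
    {p : Polynomial ℝ} (hp : p ∈ degreeLE ℝ n) (hp0 : p ≠ 0) :
    0 < ∫ s, evalFunₗ ℝ p s ^ 2 ∂ν := by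
  obtain ⟨t, ht⟩ : ∃ t, p.eval t ≠ 0 := by
    by_contra! h0
    exact hp0 (Polynomial.funext (by simpa using h0))
  exact integral_sq_pos_of_sInf_pos (h t) hp ht

theorem MvPolynomial.isReproducingKernel_prod {ι : Type*} [Fintype ι] {μ : ι → Measure ℝ}
    [∀ i, SigmaFinite (μ i)] {n : ℕ} {x : ι → ℝ} {k : ι → Polynomial ℝ}
    (hk : ∀ i, IsReproducingKernel (μ i) (Polynomial.evalFunₗ ℝ) (degreeLE ℝ n) (leval (x i)) (k i))
    (hint : ∀ p q : MvPolynomial ι ℝ,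
      Integrable (fun y => evalFunₗ ι ℝ p y * evalFunₗ ι ℝ q y) (Measure.pi μ)) :
    IsReproducingKernel (Measure.pi μ) (evalFunₗ ι ℝ) (restrictDegree ι ℝ n)
      (aeval x).toLinearMap (∏ i, Polynomial.aeval (X i) (k i)) := by
  have hkdeg : ∀ i, (k i).natDegree ≤ n := fun i =>
    Polynomial.natDegree_le_iff_degree_le.2 (Polynomial.mem_degreeLE.1 (hk i).1)
  refine isReproducingKernel_of_le_span hint (prod_polynomial_aeval_X_mem_restrictDegree hkdeg)
    (restrictSupport_eq_span _ _).le ?_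
  rintro _ ⟨α, hα, rfl⟩
  simp only [evalFunₗ_apply, map_prod, eval_polynomial_aeval_X, eval_monomial, one_mul,
    Finsupp.prod_fintype _ _ (fun i => pow_zero _), ← Finset.prod_mul_distrib]
  rw [integral_fintype_prod_eq_prod (fun i s => (k i).eval s * s ^ α i)]
  rw [AlgHom.toLinearMap_apply, aeval_monomial, map_one, one_mul,
    Finsupp.prod_fintype _ _ fun i => pow_zero _]
  refine Finset.prod_congr rfl fun i _ => ?_
  have hXpow : (Polynomial.X ^ α i : Polynomial ℝ) ∈ degreeLE ℝ n :=
    Polynomial.mem_degreeLE.2 ((Polynomial.degree_X_pow_le _).trans (by exact_mod_cast hα i))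
  simpa using (hk i).2 _ hXpow

theorem Polynomial.exists_isReproducingKernel_degreeLE {ν : Measure ℝ} {n : ℕ}
    (hint : ∀ p q : Polynomial ℝ, Integrable (fun s => evalFunₗ ℝ p s * evalFunₗ ℝ q s) ν)
    (h : ∀ t, 0 < sInf (constrainedSqIntegrals ν (evalFunₗ ℝ) (degreeLE ℝ n) (leval t)))
    (t : ℝ) :
    ∃ k, IsReproducingKernel ν (evalFunₗ ℝ) (degreeLE ℝ n) (leval t) k ∧ 0 < k.eval t := by
  have := finiteDimensional_degreeLE ℝ n
  have hpos : ∀ p ∈ degreeLE ℝ n, p ≠ 0 → 0 < ∫ s, evalFunₗ ℝ p s ^ 2 ∂ν :=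
    fun _ => integral_eval_sq_pos h
  obtain ⟨k, hk⟩ := exists_isReproducingKernel hint hpos (leval t)
  have hone : (1 : Polynomial ℝ) ∈ degreeLE ℝ n :=
    mem_degreeLE.2 (degree_one_le.trans (by exact_mod_cast n.zero_le))
  exact ⟨k, hk, hk.apply_pos hpos hone (by simp)⟩

end Christoffel

theorem stmt_2_general (d n : ℕ) (μ : Fin d → Measure ℝ) [∀ i, IsProbabilityMeasure (μ i)]
    (hcpt : ∀ i, ∃ K : Set ℝ, IsCompact K ∧ μ i Kᶜ = 0)
    (Λ : (Fin d → ℝ) → ℝ)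
    (hΛ : ∀ z, (Λ z)⁻¹ = sInf {v : ℝ | ∃ p : MvPolynomial (Fin d) ℝ,
      (∀ i, p.degreeOf i ≤ n) ∧ eval z p = 1 ∧
        v = ∫ x, (eval x p) ^ 2 ∂(Measure.pi μ)})
    (lam : Fin d → ℝ → ℝ)
    (hlam : ∀ i t, (lam i t)⁻¹ = sInf {v : ℝ | ∃ p : Polynomial ℝ,
      p.natDegree ≤ n ∧ p.eval t = 1 ∧ v = ∫ s, (p.eval s) ^ 2 ∂(μ i)})
    (hlampos : ∀ i t, 0 < lam i t) :
    ∀ x : Fin d → ℝ, Λ x = ∏ i, lam i (x i) := by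
  intro x
  choose K hK hμK using hcpt
  have hsupp : ∀ i, ∀ᵐ s ∂μ i, s ∈ K i := fun i => mem_ae_iff.2 (hμK i)
  simp only [Polynomial.setOf_natDegree_le_eq_constrainedSqIntegrals] at hlam
  simp only [MvPolynomial.setOf_degreeOf_le_eq_constrainedSqIntegrals] at hΛ
  have hint : ∀ i, ∀ p q : Polynomial ℝ,
      Integrable (fun s => Polynomial.evalFunₗ ℝ p s * Polynomial.evalFunₗ ℝ q s) (μ i) :=
    fun i p q => (p.continuous.mul q.continuous).integrable_of_ae_mem_isCompact (hK i) (hsupp i)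
  have hint_pi : ∀ p q : MvPolynomial (Fin d) ℝ,
      Integrable (fun y => evalFunₗ _ ℝ p y * evalFunₗ _ ℝ q y) (Measure.pi μ) :=
    fun p q => (p.continuous_eval.mul q.continuous_eval).integrable_of_ae_mem_isCompact
      (isCompact_univ_pi hK) (Measure.ae_mem_univ_pi hsupp)
  choose k hk hkx using fun i => Polynomial.exists_isReproducingKernel_degreeLE (hint i)
    (fun t => hlam i t ▸ inv_pos.2 (hlampos i t)) (x i)
  have hlam_eq : ∀ i, lam i (x i) = (k i).eval (x i) := fun i => inv_injective <| by
    rw [hlam, (hk i).sInf_constrainedSqIntegrals (hint i) (hkx i)]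
    rfl
  have hP := isReproducingKernel_prod hk hint_pi
  have hPx : (aeval x).toLinearMap (∏ i, Polynomial.aeval (X i : MvPolynomial (Fin d) ℝ) (k i)) =
      ∏ i, (k i).eval (x i) := by
    simp [eval_polynomial_aeval_X]
  rw [Finset.prod_congr rfl fun i _ => hlam_eq i, ← hPx]
  refine inv_injective ?_
  rw [hΛ, hP.sInf_constrainedSqIntegrals hint_pi (hPx ▸ Finset.prod_pos fun i _ => hkx i)]

/-- for a product of univariate probability measures, the
coordinate-wise Christoffel polynomial factorizes as the product of the
univariate Christoffel polynomials. -/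
theorem stmt_2 (d n : ℕ) (μ : Fin d → Measure ℝ) [∀ i, IsProbabilityMeasure (μ i)]
    (hcpt : ∀ i, ∃ K : Set ℝ, IsCompact K ∧ μ i Kᶜ = 0)
    (Λ : (Fin d → ℝ) → ℝ)
    (hΛ : ∀ z, (Λ z)⁻¹ = sInf {v : ℝ | ∃ p : MvPolynomial (Fin d) ℝ,
      (∀ i, p.degreeOf i ≤ n) ∧ eval z p = 1 ∧
        v = ∫ x, (eval x p) ^ 2 ∂(Measure.pi μ)})
    (hΛpos : ∀ z, 0 < Λ z)
    (lam : Fin d → ℝ → ℝ)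
    (hlam : ∀ i t, (lam i t)⁻¹ = sInf {v : ℝ | ∃ p : Polynomial ℝ,
      p.natDegree ≤ n ∧ p.eval t = 1 ∧ v = ∫ s, (p.eval s) ^ 2 ∂(μ i)})
    (hlampos : ∀ i t, 0 < lam i t) :
    ∀ x : Fin d → ℝ, Λ x = ∏ i, lam i (x i) :=
  stmt_2_general d n μ hcpt Λ hΛ lam hlam hlampos
end

section
/- Let μ be a positive Borel probability measure supported on a compact set Ω ⊆ ℝ^d, and x ∉ Ω a fixed point. Then there exists α > 0 and c > 0 such that the coordinate-wise Christoffel polynomial satisfies Λ_{⊗n}^μ(x) ≥ c·exp(α·n) for all sufficiently large n. -/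
open MeasureTheory MvPolynomial

/-!
Since `x ∉ Ω` and `Ω` is compact, the quadratic `q y = 1 - ‖y - x‖² / B` (with `B` large) equals `1`
at `x` and satisfies `|q| ≤ r < 1` on `Ω`. The power `q ^ (n / 2)` is admissible for the
coordinate-wise degree `n` and has `L²(μ)`-norm squared at most `r ^ (2 * (n / 2))`, so
`Λ n x ≥ r⁻¹ ^ (2 * (n / 2)) ≥ r · exp (n · log r⁻¹)`.
-/

lemma totalDegree_sum_sq_X_sub_C_le {d : ℕ} (x : Fin d → ℝ) :
    (∑ i, (X i - C (x i)) ^ 2 : MvPolynomial (Fin d) ℝ).totalDegree ≤ 2 := by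
  refine (totalDegree_finsetSum _ _).trans (Finset.sup_le fun i _ => ?_)
  have h := (totalDegree_sub_C_le (X i : MvPolynomial (Fin d) ℝ) (x i)).trans
    (totalDegree_X i).le
  exact (totalDegree_pow _ _).trans (by omega)

lemma exists_degreeOf_le_two_peak_of_notMem {d : ℕ} {Ω : Set (Fin d → ℝ)} (hΩ : IsCompact Ω)
    {x : Fin d → ℝ} (hx : x ∉ Ω) :
    ∃ q : MvPolynomial (Fin d) ℝ, (∀ i, q.degreeOf i ≤ 2) ∧ eval x q = 1 ∧
      ∃ r ∈ Set.Ioo (0 : ℝ) 1, ∀ y ∈ Ω, |eval y q| ≤ r := by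
  set g : MvPolynomial (Fin d) ℝ := ∑ i, (X i - C (x i)) ^ 2
  have hg_eval (y : Fin d → ℝ) : eval y g = ∑ i, (y i - x i) ^ 2 := by simp [g]
  have hg_pos : ∀ y ∈ Ω, 0 < eval y g := by
    intro y hy
    obtain ⟨i, hi⟩ := Function.ne_iff.mp (ne_of_mem_of_not_mem hy hx)
    rw [hg_eval]
    exact (pow_pos (abs_pos.mpr (sub_ne_zero.mpr hi)) 2).trans_le
      ((sq_abs _).le.trans (Finset.single_le_sum (fun j _ => sq_nonneg (y j - x j))
        (Finset.mem_univ i)))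
  have hg_cont : ContinuousOn (fun y => eval y g) Ω := (continuous_eval g).continuousOn
  obtain ⟨a, ha, hag⟩ := hΩ.exists_forall_le' hg_cont hg_pos
  obtain ⟨b, hgb⟩ := hΩ.bddAbove_image hg_cont
  set B := max b (2 * a)
  have hB : 0 < B := lt_max_of_lt_right (by linarith)
  have haB : a / B < 1 := (div_lt_one hB).mpr (lt_max_of_lt_right (by linarith))
  refine ⟨1 - C B⁻¹ * g, fun i => ?_, ?_, 1 - a / B, ⟨by linarith, by simp [ha, hB]⟩, ?_⟩
  · refine (degreeOf_le_totalDegree _ i).trans ((totalDegree_sub _ _).trans (max_le ?_ ?_))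
    · simp
    · exact (totalDegree_mul _ _).trans (by simpa using totalDegree_sum_sq_X_sub_C_le x)
  · simp [g]
  · intro y hy
    have hgB : eval y g ≤ B := (hgb ⟨y, hy, rfl⟩).trans (le_max_left _ _)
    have hq : eval y (1 - C B⁻¹ * g) = 1 - eval y g / B := by simp [div_eq_inv_mul]
    rw [hq, abs_le]
    have h1 : eval y g / B ≤ 1 := (div_le_one hB).mpr hgB
    have h2 : a / B ≤ eval y g / B := div_le_div_of_nonneg_right (hag y hy) hB.le
    constructor <;> linarith

lemma sInf_integral_sq_le_of_ae_abs_le {d n : ℕ} (μ : Measure (Fin d → ℝ))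
    [IsProbabilityMeasure μ] {z : Fin d → ℝ} {p : MvPolynomial (Fin d) ℝ}
    (hdeg : ∀ i, p.degreeOf i ≤ n) (hz : eval z p = 1) {s : ℝ}
    (hs : ∀ᵐ y ∂μ, |eval y p| ≤ s) :
    sInf {v : ℝ | ∃ p : MvPolynomial (Fin d) ℝ,
      (∀ i, p.degreeOf i ≤ n) ∧ eval z p = 1 ∧ v = ∫ y, (eval y p) ^ 2 ∂μ} ≤ s ^ 2 := by
  have hsq : ∀ᵐ y ∂μ, (eval y p) ^ 2 ≤ s ^ 2 := hs.mono fun y hy => by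
    simpa only [sq_abs] using pow_le_pow_left₀ (abs_nonneg _) hy 2
  have hbdd : BddBelow {v : ℝ | ∃ p : MvPolynomial (Fin d) ℝ,
      (∀ i, p.degreeOf i ≤ n) ∧ eval z p = 1 ∧ v = ∫ y, (eval y p) ^ 2 ∂μ} := by
    refine ⟨0, ?_⟩
    rintro _ ⟨p, -, -, rfl⟩
    exact integral_nonneg fun y => sq_nonneg _
  calc _ ≤ ∫ y, (eval y p) ^ 2 ∂μ := csInf_le hbdd ⟨p, hdeg, hz, rfl⟩
    _ ≤ ∫ _, s ^ 2 ∂μ := integral_mono_of_nonneg (.of_forall fun y => sq_nonneg _)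
        (integrable_const _) hsq
    _ = s ^ 2 := by simp

lemma sInf_integral_sq_le_pow_of_degreeOf_le_two {d : ℕ} (μ : Measure (Fin d → ℝ))
    [IsProbabilityMeasure μ] {z : Fin d → ℝ} {q : MvPolynomial (Fin d) ℝ}
    (hdeg : ∀ i, q.degreeOf i ≤ 2) (hz : eval z q = 1) {r : ℝ}
    (hr : ∀ᵐ y ∂μ, |eval y q| ≤ r) (n : ℕ) :
    sInf {v : ℝ | ∃ p : MvPolynomial (Fin d) ℝ,
      (∀ i, p.degreeOf i ≤ n) ∧ eval z p = 1 ∧ v = ∫ y, (eval y p) ^ 2 ∂μ} ≤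
      r ^ (2 * (n / 2)) := by
  rw [mul_comm, pow_mul]
  refine sInf_integral_sq_le_of_ae_abs_le μ (p := q ^ (n / 2)) (fun i => ?_) (by simp [hz]) ?_
  · exact (degreeOf_pow_le i q _).trans ((Nat.mul_le_mul_left _ (hdeg i)).trans (by omega))
  · exact hr.mono fun y hy => by
      simpa only [map_pow, abs_pow] using pow_le_pow_left₀ (abs_nonneg _) hy _

lemma mul_inv_pow_le_inv_pow_two_mul_div_two {r : ℝ} (hr0 : 0 < r) (hr1 : r ≤ 1) (n : ℕ) :
    r * r⁻¹ ^ n ≤ (r ^ (2 * (n / 2)))⁻¹ := by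
  calc r * r⁻¹ ^ n ≤ r * r⁻¹ ^ (2 * (n / 2) + 1) :=
        mul_le_mul_of_nonneg_left (pow_le_pow_right₀ (one_le_inv₀ hr0 |>.mpr hr1) (by omega))
          hr0.le
    _ = (r ^ (2 * (n / 2)))⁻¹ := by
        rw [pow_succ, inv_pow, mul_comm, mul_assoc, inv_mul_cancel₀ hr0.ne', mul_one]

/-- exponential growth of the coordinate-wise Christoffel
polynomial outside the support. -/
theorem stmt_13 (d : ℕ) (μ : Measure (Fin d → ℝ)) [IsProbabilityMeasure μ]
    (Ω : Set (Fin d → ℝ)) (hΩ : IsCompact Ω) (hsupp : μ Ωᶜ = 0)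
    (x : Fin d → ℝ) (hx : x ∉ Ω)
    (Λ : ℕ → (Fin d → ℝ) → ℝ)
    (hΛ : ∀ n z, (Λ n z)⁻¹ = sInf {v : ℝ | ∃ p : MvPolynomial (Fin d) ℝ,
      (∀ i, p.degreeOf i ≤ n) ∧ eval z p = 1 ∧ v = ∫ y, (eval y p) ^ 2 ∂μ})
    (hΛpos : ∀ n z, 0 < Λ n z) :
    ∃ α > (0 : ℝ), ∃ c > (0 : ℝ), ∃ N : ℕ, ∀ n ≥ N,
      c * Real.exp (α * n) ≤ Λ n x := by
  obtain ⟨q, hqdeg, hqx, r, ⟨hr0, hr1⟩, hqΩ⟩ := exists_degreeOf_le_two_peak_of_notMem hΩ hx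
  have hqμ : ∀ᵐ y ∂μ, |eval y q| ≤ r := (ae_iff.mpr hsupp).mono hqΩ
  refine ⟨Real.log r⁻¹, Real.log_pos ((one_lt_inv₀ hr0).mpr hr1), r, hr0, 0, fun n _ => ?_⟩
  have hinv : (Λ n x)⁻¹ ≤ r ^ (2 * (n / 2)) :=
    hΛ n x ▸ sInf_integral_sq_le_pow_of_degreeOf_le_two μ hqdeg hqx hqμ n
  calc r * Real.exp (Real.log r⁻¹ * n) = r * r⁻¹ ^ n := by
        rw [mul_comm (Real.log _), Real.exp_nat_mul, Real.exp_log (inv_pos.mpr hr0)]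
    _ ≤ (r ^ (2 * (n / 2)))⁻¹ := mul_inv_pow_le_inv_pow_two_mul_div_two hr0 hr1.le n
    _ ≤ Λ n x := (inv_le_comm₀ (hΛpos n x) (pow_pos hr0 _)).mp hinv
end
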